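/- arXiv:1810.07805 — 2 statements merged into one kernel-verified Lean document; each statement's English description precedes it below -/
import Mathlib

section
/- Under the same assumptions (μ_k → 0), for every 0 ≤ a < b ≤ 1 the probability P(a < Q_k ≤ b) = Σ_m p_m(k)(⌊mb⌋ − ⌊ma⌋)/(m+1) converges to b − a as k → ∞. -/
open Filter

set_option maxHeartbeats 800000 in
/-- If μ_k = Σ_{m≥1} p_m(k)/m → 0, then for every 0 ≤ a < b ≤ 1,
P(a < Q_k ≤ b) = Σ_{m≥1} p_m(k)(⌊mb⌋−⌊ma⌋)/(m+1) → b − a. -/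
theorem prob_interval_tendsto (p : ℕ → ℕ → ℝ)
    (hp : ∀ k m, 0 ≤ p k m) (hsum : ∀ k, ∑' m : ℕ, p k (m + 1) = 1)
    (hμ : Tendsto (fun k : ℕ => ∑' m : ℕ, p k (m + 1) / (m + 1)) atTop (nhds 0))
    (a b : ℝ) (ha : 0 ≤ a) (hab : a < b) (hb : b ≤ 1) :
    Tendsto (fun k : ℕ => ∑' m : ℕ,
        p k (m + 1) * ((⌊(m + 1 : ℝ) * b⌋ - ⌊(m + 1 : ℝ) * a⌋ : ℤ) : ℝ) / (m + 2))
      atTop (nhds (b - a)) := by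
  simp only [mul_div_assoc]
  set c : ℕ → ℝ := fun m => ((⌊(m + 1 : ℝ) * b⌋ - ⌊(m + 1 : ℝ) * a⌋ : ℤ) : ℝ) / (m + 2)
    with hc
  have hm2 : ∀ m : ℕ, (0:ℝ) < (m:ℝ) + 2 := fun m => by positivity
  have hm1 : ∀ m : ℕ, (0:ℝ) < (m:ℝ) + 1 := fun m => by positivity
  have hfb1 : ∀ m : ℕ, ((m:ℝ) + 1) * b - 1 < (⌊((m:ℝ) + 1) * b⌋ : ℝ) :=
    fun m => Int.sub_one_lt_floor _
  have hfb2 : ∀ m : ℕ, ((⌊((m:ℝ) + 1) * b⌋ : ℤ) : ℝ) ≤ ((m:ℝ) + 1) * b :=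
    fun m => Int.floor_le _
  have hfa1 : ∀ m : ℕ, ((m:ℝ) + 1) * a - 1 < (⌊((m:ℝ) + 1) * a⌋ : ℝ) :=
    fun m => Int.sub_one_lt_floor _
  have hfa2 : ∀ m : ℕ, ((⌊((m:ℝ) + 1) * a⌋ : ℤ) : ℝ) ≤ ((m:ℝ) + 1) * a :=
    fun m => Int.floor_le _
  have hfa0 : ∀ m : ℕ, (0:ℝ) ≤ ((⌊((m:ℝ) + 1) * a⌋ : ℤ) : ℝ) := fun m => by
    have : (0:ℤ) ≤ ⌊((m:ℝ) + 1) * a⌋ := Int.floor_nonneg.mpr (by positivity)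
    exact_mod_cast this
  have hmono : ∀ m : ℕ, ((⌊((m:ℝ) + 1) * a⌋ : ℤ) : ℝ) ≤ ((⌊((m:ℝ) + 1) * b⌋ : ℤ) : ℝ) :=
    fun m => by
      have : ⌊((m:ℝ) + 1) * a⌋ ≤ ⌊((m:ℝ) + 1) * b⌋ :=
        Int.floor_le_floor (by nlinarith)
      exact_mod_cast this
  have hc0 : ∀ m, 0 ≤ c m := fun m => by
    rw [hc]
    exact div_nonneg (by push_cast; linarith [hmono m]) (hm2 m).le
  have hc1 : ∀ m, c m ≤ 1 := fun m => by
    rw [hc]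
    rw [div_le_one (hm2 m)]
    push_cast
    nlinarith [hfb2 m, hfa0 m]
  have hcb : ∀ m, |c m - (b - a)| ≤ 2 / ((m:ℝ) + 1) := fun m => by
    have key : |((⌊((m:ℝ) + 1) * b⌋ - ⌊((m:ℝ) + 1) * a⌋ : ℤ) : ℝ) - ((m:ℝ) + 2) * (b - a)| ≤ 2 := by
      rw [abs_le]
      push_cast
      constructor <;> nlinarith [hfb1 m, hfb2 m, hfa1 m, hfa2 m]
    have heq : c m - (b - a)
        = (((⌊((m:ℝ) + 1) * b⌋ - ⌊((m:ℝ) + 1) * a⌋ : ℤ) : ℝ) - ((m:ℝ) + 2) * (b - a)) / ((m:ℝ) + 2) := by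
      rw [hc]
      field_simp
    rw [heq, abs_div, abs_of_pos (hm2 m)]
    gcongr
    linarith
  -- summability facts
  have hSp : ∀ k, Summable fun m => p k (m + 1) := fun k => by
    by_contra h
    have := hsum k
    rw [tsum_eq_zero_of_not_summable h] at this
    norm_num at this
  have hSc : ∀ k, Summable fun m => p k (m + 1) * c m := fun k =>
    (hSp k).of_nonneg_of_le (fun m => mul_nonneg (hp _ _) (hc0 m))
      (fun m => mul_le_of_le_one_right (hp _ _) (hc1 m))
  have hSμ : ∀ k, Summable fun m => p k (m + 1) / ((m:ℝ) + 1) := fun k =>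
    (hSp k).of_nonneg_of_le (fun m => div_nonneg (hp _ _) (hm1 m).le)
      (fun m => by
        rw [div_le_iff₀ (hm1 m)]
        nlinarith [hp k (m + 1), (hm1 m)])
  have key : ∀ k, |(∑' m, p k (m + 1) * c m) - (b - a)|
      ≤ 2 * ∑' m : ℕ, p k (m + 1) / ((m:ℝ) + 1) := by
    intro k
    have heq2 : (fun m : ℕ => p k (m + 1) * (c m - (b - a)))
        = fun m : ℕ => p k (m + 1) * c m - p k (m + 1) * (b - a) :=
      funext fun m => by ring
    have heq : (∑' m, p k (m + 1) * c m) - (b - a)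
        = ∑' m, p k (m + 1) * (c m - (b - a)) := by
      rw [heq2, Summable.tsum_sub (hSc k) ((hSp k).mul_right _), tsum_mul_right, hsum k, one_mul]
    rw [heq]
    have hSd : Summable fun m => p k (m + 1) * (c m - (b - a)) := by
      rw [heq2]
      exact (hSc k).sub ((hSp k).mul_right _)
    calc |∑' m, p k (m + 1) * (c m - (b - a))|
        ≤ ∑' m, |p k (m + 1) * (c m - (b - a))| := by
          have h := norm_tsum_le_tsum_norm (f := fun m : ℕ => p k (m + 1) * (c m - (b - a)))
            (by simpa only [Real.norm_eq_abs] using hSd.abs)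
          simpa only [Real.norm_eq_abs] using h
      _ ≤ ∑' m : ℕ, 2 * (p k (m + 1) / ((m:ℝ) + 1)) := by
          refine Summable.tsum_le_tsum (fun m => ?_) hSd.abs ((hSμ k).mul_left 2)
          rw [abs_mul, abs_of_nonneg (hp _ _)]
          calc p k (m + 1) * |c m - (b - a)| ≤ p k (m + 1) * (2 / ((m:ℝ) + 1)) := by
                exact mul_le_mul_of_nonneg_left (hcb m) (hp _ _)
            _ = 2 * (p k (m + 1) / ((m:ℝ) + 1)) := by ring
      _ = 2 * ∑' m : ℕ, p k (m + 1) / ((m:ℝ) + 1) := tsum_mul_left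
  rw [tendsto_iff_dist_tendsto_zero]
  simp only [Real.dist_eq]
  refine squeeze_zero (fun k => abs_nonneg _) key ?_
  simpa using hμ.const_mul 2
end

section
/- Under the same assumptions (μ_k → 0), the CDF F_{Q_k}(x) = Σ_m p_m(k)(⌊mx⌋+1)/(m+1) converges pointwise, as k → ∞, to the uniform CDF on [0,1]: the limit is 0 for x < 0, x for 0 ≤ x < 1, and 1 for x ≥ 1. -/
open Filter


lemma tsum_ite_le_const (c : ℝ) (N : ℕ) :
    ∑' n : ℕ, (if n ≤ N then c else 0) = (N + 1 : ℝ) * c := by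
  rw [tsum_eq_sum (s := Finset.range (N + 1))
      (by intro n hn; rw [if_neg]; simpa [Nat.lt_succ_iff] using hn)]
  rw [Finset.sum_congr rfl (fun n hn => if_pos (by simpa [Nat.lt_succ_iff] using hn))]
  simp [Finset.sum_const, mul_comm]

lemma cdf_eq (q : ℕ → ℝ) (hq : ∀ m, 0 ≤ q m) (hqs : Summable fun m => q (m + 1))
    (x : ℝ) (hx : 0 ≤ x) :
    (∑' pair : ℕ × ℕ,
        if 1 ≤ pair.2 ∧ pair.1 ≤ pair.2 ∧ (pair.1 : ℝ) ≤ pair.2 * x then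
          q pair.2 / (pair.2 + 1) else 0)
    = ∑' m : ℕ, ((min (m + 1) ⌊((m : ℝ) + 1) * x⌋₊ : ℕ) + 1 : ℝ) * (q (m + 1) / (m + 2)) := by
  set N : ℕ → ℕ := fun m => min m ⌊(m : ℝ) * x⌋₊ with hN
  set g : ℕ × ℕ → ℝ := fun pr => if 1 ≤ pr.1 ∧ pr.2 ≤ N pr.1 then q pr.1 / (pr.1 + 1) else 0
    with hg
  have hqsum : Summable q := (summable_nat_add_iff 1).mp hqs
  have hcond : ∀ n m : ℕ, (1 ≤ m ∧ n ≤ m ∧ (n : ℝ) ≤ m * x) ↔ (1 ≤ m ∧ n ≤ N m) := by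
    intro n m
    have : ((n : ℝ) ≤ m * x) ↔ n ≤ ⌊(m : ℝ) * x⌋₊ :=
      (Nat.le_floor_iff (by positivity)).symm
    simp [hN, le_min_iff, this, and_assoc]
  have hfg : ∀ pr : ℕ × ℕ,
      (if 1 ≤ pr.2 ∧ pr.1 ≤ pr.2 ∧ (pr.1 : ℝ) ≤ pr.2 * x then q pr.2 / (pr.2 + 1) else 0)
        = g (Equiv.prodComm ℕ ℕ pr) := by
    intro ⟨n, m⟩
    simp only [hg, Equiv.prodComm_apply, Prod.swap]
    exact if_congr (hcond n m) rfl rfl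
  have hinner : ∀ m : ℕ, ∑' n : ℕ, g (m, n)
      = if 1 ≤ m then ((N m : ℝ) + 1) * (q m / (m + 1)) else 0 := by
    intro m
    by_cases hm : 1 ≤ m
    · rw [if_pos hm]
      have : (fun n : ℕ => g (m, n)) = fun n => if n ≤ N m then q m / (m + 1) else 0 := by
        funext n; simp [hg, hm]
      rw [this, tsum_ite_le_const]
    · rw [if_neg hm]
      have : (fun n : ℕ => g (m, n)) = fun _ => 0 := by
        funext n; simp [hg, hm]
      rw [this, tsum_zero]
  have hinner_summ : ∀ m : ℕ, Summable fun n : ℕ => g (m, n) := by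
    intro m
    apply summable_of_ne_finset_zero (s := Finset.range (N m + 1))
    intro n hn
    simp only [Finset.mem_range, Nat.lt_succ_iff, not_le] at hn
    exact if_neg (fun h => absurd h.2 (not_le.mpr hn))
  have houter_le : ∀ m : ℕ,
      (if 1 ≤ m then ((N m : ℝ) + 1) * (q m / (m + 1)) else 0) ≤ q m := by
    intro m
    by_cases hm : 1 ≤ m
    · rw [if_pos hm]
      have h1 : ((N m : ℝ) + 1) ≤ (m : ℝ) + 1 := by
        have : N m ≤ m := min_le_left _ _
        exact_mod_cast Nat.succ_le_succ this
      have h2 : 0 ≤ q m / (m + 1) := div_nonneg (hq m) (by positivity)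
      calc ((N m : ℝ) + 1) * (q m / (m + 1)) ≤ ((m : ℝ) + 1) * (q m / (m + 1)) :=
            mul_le_mul_of_nonneg_right h1 h2
        _ = q m := by field_simp
    · rw [if_neg hm]; exact hq m
  have houter_nonneg : ∀ m : ℕ,
      0 ≤ (if 1 ≤ m then ((N m : ℝ) + 1) * (q m / (m + 1)) else 0) := by
    intro m; split
    · have h1 : (0:ℝ) ≤ (N m : ℝ) + 1 := by positivity
      have h2 : 0 ≤ q m / (m + 1) := div_nonneg (hq m) (by positivity)
      exact mul_nonneg h1 h2
    · exact le_rfl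
  have hgnn : ∀ pr : ℕ × ℕ, 0 ≤ g pr := by
    intro pr; simp only [hg]; split
    · exact div_nonneg (hq _) (by positivity)
    · exact le_rfl
  have hSout : Summable (fun m : ℕ => if 1 ≤ m then ((N m : ℝ) + 1) * (q m / (m + 1)) else 0) :=
    Summable.of_nonneg_of_le houter_nonneg houter_le hqsum
  have hgsum : Summable g := by
    rw [summable_prod_of_nonneg hgnn]
    exact ⟨hinner_summ, (summable_congr hinner).mpr hSout⟩
  calc (∑' pair : ℕ × ℕ,
        if 1 ≤ pair.2 ∧ pair.1 ≤ pair.2 ∧ (pair.1 : ℝ) ≤ pair.2 * x then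
          q pair.2 / (pair.2 + 1) else 0)
      = ∑' pair : ℕ × ℕ, g (Equiv.prodComm ℕ ℕ pair) := tsum_congr hfg
    _ = ∑' pr : ℕ × ℕ, g pr := (Equiv.prodComm ℕ ℕ).tsum_eq g
    _ = ∑' m : ℕ, ∑' n : ℕ, g (m, n) := Summable.tsum_prod' hgsum hinner_summ
    _ = ∑' m : ℕ, (if 1 ≤ m then ((N m : ℝ) + 1) * (q m / (m + 1)) else 0) := tsum_congr hinner
    _ = (if (1:ℕ) ≤ 0 then ((N 0 : ℝ) + 1) * (q 0 / (0 + 1)) else 0)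
        + ∑' m : ℕ, (if 1 ≤ m + 1 then ((N (m+1) : ℝ) + 1) * (q (m+1) / ((m:ℝ) + 1 + 1)) else 0) := by
        rw [Summable.tsum_eq_zero_add hSout]
        norm_num
    _ = ∑' m : ℕ, ((min (m + 1) ⌊((m : ℝ) + 1) * x⌋₊ : ℕ) + 1 : ℝ) * (q (m + 1) / (m + 2)) := by
        rw [if_neg (by norm_num)]
        rw [zero_add]
        refine tsum_congr fun m => ?_
        rw [if_pos (Nat.succ_le_succ (Nat.zero_le m))]
        have : ((m:ℝ) + 1 + 1) = (m:ℝ) + 2 := by ring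
        rw [this, hN]
        norm_num [Nat.cast_succ]

/-- If μ_k = Σ_{m≥1} p_m(k)/m → 0, then the CDF of Q_k = N_k/M_k converges
pointwise to the uniform CDF on [0,1]: 0 for x < 0, x for 0 ≤ x < 1, 1 for x ≥ 1. -/
theorem cdf_tendsto_uniform (p : ℕ → ℕ → ℝ)
    (hp : ∀ k m, 0 ≤ p k m) (hsum : ∀ k, ∑' m : ℕ, p k (m + 1) = 1)
    (hμ : Tendsto (fun k : ℕ => ∑' m : ℕ, p k (m + 1) / (m + 1)) atTop (nhds 0))
    (x : ℝ) :
    Tendsto (fun k : ℕ => ∑' pair : ℕ × ℕ,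
        if 1 ≤ pair.2 ∧ pair.1 ≤ pair.2 ∧ (pair.1 : ℝ) ≤ pair.2 * x then
          p k pair.2 / (pair.2 + 1) else 0)
      atTop (nhds (if x < 0 then 0 else if x < 1 then x else 1)) := by
  by_cases hx0 : x < 0
  · have hF : (fun k : ℕ => ∑' pair : ℕ × ℕ,
        if 1 ≤ pair.2 ∧ pair.1 ≤ pair.2 ∧ (pair.1 : ℝ) ≤ pair.2 * x then
          p k pair.2 / (pair.2 + 1) else 0) = fun _ => (0:ℝ) := by
      funext k
      have hz : ∀ pair : ℕ × ℕ,
          (if 1 ≤ pair.2 ∧ pair.1 ≤ pair.2 ∧ (pair.1 : ℝ) ≤ pair.2 * x then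
            p k pair.2 / (pair.2 + 1) else 0) = 0 := by
        rintro ⟨n, m⟩
        rw [if_neg]
        rintro ⟨h1, _, h3⟩
        have hm : (0:ℝ) < m := by exact_mod_cast h1
        have : (m:ℝ) * x < 0 := mul_neg_of_pos_of_neg hm hx0
        have hn : (0:ℝ) ≤ n := Nat.cast_nonneg n
        linarith
      simp only [hz, tsum_zero]
    rw [hF, if_pos hx0]
    exact tendsto_const_nhds
  push_neg at hx0
  have hsq : ∀ k, Summable fun m => p k (m + 1) := by
    intro k
    by_contra h
    have h1 := hsum k
    rw [tsum_eq_zero_of_not_summable h] at h1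
    norm_num at h1
  have hEq : (fun k : ℕ => ∑' pair : ℕ × ℕ,
        if 1 ≤ pair.2 ∧ pair.1 ≤ pair.2 ∧ (pair.1 : ℝ) ≤ pair.2 * x then
          p k pair.2 / (pair.2 + 1) else 0)
      = fun k : ℕ => ∑' m : ℕ,
          ((min (m + 1) ⌊((m : ℝ) + 1) * x⌋₊ : ℕ) + 1 : ℝ) * (p k (m + 1) / (m + 2)) :=
    funext fun k => cdf_eq (p k) (hp k) (hsq k) x hx0
  rw [hEq, if_neg (not_lt.mpr hx0)]
  by_cases hx1 : x < 1
  · rw [if_pos hx1]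
    -- bounds
    have hclt : ∀ m : ℕ, ((m : ℝ) + 1) * x < ((min (m + 1) ⌊((m : ℝ) + 1) * x⌋₊ : ℕ) + 1 : ℝ) := by
      intro m
      rcases le_total (m + 1) ⌊((m : ℝ) + 1) * x⌋₊ with h | h
      · rw [min_eq_left h]
        push_cast
        nlinarith [hx1, Nat.cast_nonneg (α := ℝ) m]
      · rw [min_eq_right h]
        have := Nat.lt_floor_add_one (((m : ℝ) + 1) * x)
        push_cast at this ⊢
        linarith
    have hcle : ∀ m : ℕ, ((min (m + 1) ⌊((m : ℝ) + 1) * x⌋₊ : ℕ) + 1 : ℝ) ≤ ((m : ℝ) + 1) * x + 1 := by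
      intro m
      have h1 : (min (m + 1) ⌊((m : ℝ) + 1) * x⌋₊ : ℕ) ≤ ⌊((m : ℝ) + 1) * x⌋₊ := min_le_right _ _
      have h2 : ((⌊((m : ℝ) + 1) * x⌋₊ : ℝ)) ≤ ((m : ℝ) + 1) * x :=
        Nat.floor_le (by positivity)
      have h3 : ((min (m + 1) ⌊((m : ℝ) + 1) * x⌋₊ : ℕ) : ℝ) ≤ (⌊((m : ℝ) + 1) * x⌋₊ : ℝ) := by
        exact_mod_cast h1
      linarith
    have hcle' : ∀ m : ℕ, ((min (m + 1) ⌊((m : ℝ) + 1) * x⌋₊ : ℕ) + 1 : ℝ) ≤ (m : ℝ) + 2 := by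
      intro m
      have h1 : (min (m + 1) ⌊((m : ℝ) + 1) * x⌋₊ : ℕ) ≤ m + 1 := min_le_left _ _
      have : ((min (m + 1) ⌊((m : ℝ) + 1) * x⌋₊ : ℕ) : ℝ) ≤ (m : ℝ) + 1 := by exact_mod_cast h1
      linarith
    have hub : ∀ k m : ℕ,
        ((min (m + 1) ⌊((m : ℝ) + 1) * x⌋₊ : ℕ) + 1 : ℝ) * (p k (m + 1) / (m + 2))
          ≤ x * p k (m + 1) + p k (m + 1) / (m + 1) := by
      intro k m
      set c : ℝ := ((min (m + 1) ⌊((m : ℝ) + 1) * x⌋₊ : ℕ) + 1 : ℝ)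
      have hM : (0:ℝ) < (m : ℝ) + 1 := by positivity
      have h1 : c / ((m : ℝ) + 2) ≤ x + 1 / ((m : ℝ) + 1) := by
        rw [div_le_iff₀ (by positivity)]
        have := hcle m
        have hxm : 0 ≤ (m : ℝ) * x := by positivity
        rw [add_mul]
        have h2 : ((m : ℝ) + 1) * x + 1 ≤ x * ((m : ℝ) + 2) + 1 := by nlinarith
        have h3 : (1:ℝ) ≤ 1 / ((m : ℝ) + 1) * ((m : ℝ) + 2) := by
          rw [div_mul_eq_mul_div, le_div_iff₀ hM]; linarith
        linarith
      have := mul_le_mul_of_nonneg_left h1 (hp k (m + 1))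
      calc c * (p k (m + 1) / ((m : ℝ) + 2)) = p k (m + 1) * (c / ((m : ℝ) + 2)) := by ring
        _ ≤ p k (m + 1) * (x + 1 / ((m : ℝ) + 1)) := this
        _ = x * p k (m + 1) + p k (m + 1) / ((m : ℝ) + 1) := by ring
    have hlb : ∀ k m : ℕ,
        x * p k (m + 1) - p k (m + 1) / (m + 1)
          ≤ ((min (m + 1) ⌊((m : ℝ) + 1) * x⌋₊ : ℕ) + 1 : ℝ) * (p k (m + 1) / (m + 2)) := by
      intro k m
      set c : ℝ := ((min (m + 1) ⌊((m : ℝ) + 1) * x⌋₊ : ℕ) + 1 : ℝ)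
      have hM : (0:ℝ) < (m : ℝ) + 1 := by positivity
      have h1 : x - 1 / ((m : ℝ) + 1) ≤ c / ((m : ℝ) + 2) := by
        rw [le_div_iff₀ (by positivity)]
        have h2 := hclt m
        have h3 : (0:ℝ) < 1 / ((m : ℝ) + 1) := by positivity
        have h4 : 1 / ((m : ℝ) + 1) * ((m : ℝ) + 1) = 1 := by field_simp
        nlinarith [hx1.le, hx0]
      have := mul_le_mul_of_nonneg_left h1 (hp k (m + 1))
      calc x * p k (m + 1) - p k (m + 1) / ((m : ℝ) + 1)
            = p k (m + 1) * (x - 1 / ((m : ℝ) + 1)) := by ring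
        _ ≤ p k (m + 1) * (c / ((m : ℝ) + 2)) := this
        _ = c * (p k (m + 1) / ((m : ℝ) + 2)) := by ring
    -- summability
    have hTnn : ∀ k m : ℕ, 0 ≤ ((min (m + 1) ⌊((m : ℝ) + 1) * x⌋₊ : ℕ) + 1 : ℝ) * (p k (m + 1) / (m + 2)) := by
      intro k m
      exact mul_nonneg (by positivity) (div_nonneg (hp k (m + 1)) (by positivity))
    have hTle : ∀ k m : ℕ,
        ((min (m + 1) ⌊((m : ℝ) + 1) * x⌋₊ : ℕ) + 1 : ℝ) * (p k (m + 1) / (m + 2)) ≤ p k (m + 1) := by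
      intro k m
      have h2 : 0 ≤ p k (m + 1) / ((m : ℝ) + 2) := div_nonneg (hp k (m + 1)) (by positivity)
      calc ((min (m + 1) ⌊((m : ℝ) + 1) * x⌋₊ : ℕ) + 1 : ℝ) * (p k (m + 1) / (m + 2))
          ≤ ((m : ℝ) + 2) * (p k (m + 1) / (m + 2)) := mul_le_mul_of_nonneg_right (hcle' m) h2
        _ = p k (m + 1) := by field_simp
    have hTsum : ∀ k, Summable fun m : ℕ =>
        ((min (m + 1) ⌊((m : ℝ) + 1) * x⌋₊ : ℕ) + 1 : ℝ) * (p k (m + 1) / (m + 2)) :=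
      fun k => Summable.of_nonneg_of_le (hTnn k) (hTle k) (hsq k)
    have hdivsum : ∀ k, Summable fun m : ℕ => p k (m + 1) / ((m : ℝ) + 1) := by
      intro k
      refine Summable.of_nonneg_of_le (fun m => div_nonneg (hp k (m + 1)) (by positivity))
        (fun m => ?_) (hsq k)
      exact div_le_self (hp k (m + 1)) (by simp [le_add_iff_nonneg_left])
    -- squeeze
    have hup : ∀ k, (∑' m : ℕ, ((min (m + 1) ⌊((m : ℝ) + 1) * x⌋₊ : ℕ) + 1 : ℝ) * (p k (m + 1) / (m + 2)))
        ≤ x + ∑' m : ℕ, p k (m + 1) / ((m : ℝ) + 1) := by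
      intro k
      have h := Summable.tsum_le_tsum (hub k) (hTsum k) (((hsq k).mul_left x).add (hdivsum k))
      rwa [Summable.tsum_add ((hsq k).mul_left x) (hdivsum k), tsum_mul_left, hsum k, mul_one] at h
    have hlo : ∀ k, x - (∑' m : ℕ, p k (m + 1) / ((m : ℝ) + 1))
        ≤ ∑' m : ℕ, ((min (m + 1) ⌊((m : ℝ) + 1) * x⌋₊ : ℕ) + 1 : ℝ) * (p k (m + 1) / (m + 2)) := by
      intro k
      have h := Summable.tsum_le_tsum (hlb k) (((hsq k).mul_left x).sub (hdivsum k)) (hTsum k)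
      rwa [Summable.tsum_sub ((hsq k).mul_left x) (hdivsum k), tsum_mul_left, hsum k, mul_one] at h
    have h1 : Tendsto (fun k : ℕ => x - ∑' m : ℕ, p k (m + 1) / ((m : ℝ) + 1)) atTop (nhds x) := by
      have := (tendsto_const_nhds (x := x) (f := atTop (α := ℕ))).sub hμ
      simpa using this
    have h2 : Tendsto (fun k : ℕ => x + ∑' m : ℕ, p k (m + 1) / ((m : ℝ) + 1)) atTop (nhds x) := by
      have := (tendsto_const_nhds (x := x) (f := atTop (α := ℕ))).add hμ
      simpa using this
    exact tendsto_of_tendsto_of_tendsto_of_le_of_le h1 h2 hlo hup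
  · rw [if_neg hx1]
    push_neg at hx1
    have hF : ∀ k : ℕ, (∑' m : ℕ,
        ((min (m + 1) ⌊((m : ℝ) + 1) * x⌋₊ : ℕ) + 1 : ℝ) * (p k (m + 1) / (m + 2))) = 1 := by
      intro k
      have hmin : ∀ m : ℕ, min (m + 1) ⌊((m : ℝ) + 1) * x⌋₊ = m + 1 := by
        intro m
        refine min_eq_left (Nat.le_floor ?_)
        push_cast
        nlinarith [Nat.cast_nonneg (α := ℝ) m]
      have : ∀ m : ℕ, ((min (m + 1) ⌊((m : ℝ) + 1) * x⌋₊ : ℕ) + 1 : ℝ) * (p k (m + 1) / (m + 2))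
          = p k (m + 1) := by
        intro m
        rw [hmin m]
        push_cast
        field_simp
        ring
      rw [tsum_congr this, hsum k]
    have : (fun k : ℕ => ∑' m : ℕ,
        ((min (m + 1) ⌊((m : ℝ) + 1) * x⌋₊ : ℕ) + 1 : ℝ) * (p k (m + 1) / (m + 2))) = fun _ => (1:ℝ) :=
      funext hF
    rw [this]
    exact tendsto_const_nhds
end
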